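/- The set of wirings, with sum given by union of finite sets of flows and product given by the pointwise product of flows, forms a semiring (without additive inverses): addition is associative, commutative, with unit 0 (the empty set); multiplication is associative with unit I = (x ⊸ x); and multiplication distributes over addition with 0 annihilating. -/

import Mathlib

/-- First-order terms over natural-number symbols: variables and applications. -/
inductive Tm : Type
  | var : ℕ → Tm
  | app : ℕ → List Tm → Tm

namespace Tm

/-- Apply a substitution (map from variables to terms) homomorphically. -/
def subst (σ : ℕ → Tm) : Tm → Tm
  | var x => σ x
  | app f ts => app f (ts.attach.map fun ⟨t, _⟩ => subst σ t)

/-- List of variables occurring in a term. -/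
def varsL : Tm → List ℕ
  | var x => [x]
  | app _ ts => ts.attach.flatMap fun ⟨t, _⟩ => varsL t

/-- Height of a term: maximal distance from the root to a subterm. -/
def height : Tm → ℕ
  | var _ => 0
  | app _ ts => (ts.attach.map fun ⟨t, _⟩ => height t + 1).foldr max 0

/-- Heights of the occurrences of the variable `x` in a term. -/
def occs (x : ℕ) : Tm → List ℕ
  | var y => if y = x then [0] else []
  | app _ ts => ts.attach.flatMap fun ⟨t, _⟩ => (occs x t).map (· + 1)

/-- Symbols occurring in a term, together with the arity they are used with. -/
def symar : Tm → List (ℕ × ℕ)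
  | var _ => []
  | app f ts => (f, ts.length) :: ts.attach.flatMap fun ⟨t, _⟩ => symar t

end Tm

open Tm

/-- Set of variables of a term. -/
def tvars (t : Tm) : Set ℕ := {x | x ∈ t.varsL}

/-- A term is closed when it has no variables. -/
def Closed (t : Tm) : Prop := t.varsL = []

/-- A substitution is finitary when it is the identity on all but finitely many variables. -/
def Finitary (σ : ℕ → Tm) : Prop := {x | σ x ≠ .var x}.Finite

/-- `σ` unifies `t` and `u`. -/
def Unifies (σ : ℕ → Tm) (t u : Tm) : Prop := subst σ t = subst σ u

/-- `θ` is a most general unifier of `t` and `u`: a (finitary) unifier such that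
any other finitary unifier factors as an instance of it. -/
def IsMGU (θ : ℕ → Tm) (t u : Tm) : Prop :=
  Finitary θ ∧ Unifies θ t u ∧
    ∀ σ, Finitary σ → Unifies σ t u → ∃ ρ, Finitary ρ ∧ ∀ x, σ x = subst ρ (θ x)

/-- Renaming of a term along a bijection of variables. -/
def rename (π : ℕ ≃ ℕ) (t : Tm) : Tm := subst (fun x => .var (π x)) t

/-- A flow is (the data of) a pair of terms `head ⊸ body`. -/
abbrev UFlow := Tm × Tm

/-- The flow condition: the variables of the head occur in the body. -/
def IsFlow (f : UFlow) : Prop := tvars f.1 ⊆ tvars f.2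

/-- Equality of flows up to (simultaneous, bijective) renaming of variables. -/
def FlowEquiv (f g : UFlow) : Prop :=
  ∃ π : ℕ ≃ ℕ, rename π f.1 = g.1 ∧ rename π f.2 = g.2

/-- Variables of a flow. -/
def flowVars (f : UFlow) : Set ℕ := tvars f.1 ∪ tvars f.2

/-- `h` is a product of the flows `f = u ⊸ v` and `g = t ⊸ w`: choosing representatives
with disjoint variables, `h = uθ ⊸ wθ` for `θ` a most general unifier of `v` and `t`. -/
def IsProd (f g h : UFlow) : Prop :=
  ∃ f' g' θ, FlowEquiv f f' ∧ FlowEquiv g g' ∧ flowVars f' ∩ flowVars g' = ∅ ∧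
    IsMGU θ f'.2 g'.1 ∧ h = (subst θ f'.1, subst θ g'.2)

/-- A wiring: a set of flows (finite sets of flows are considered up to renaming,
so we model them as sets of representatives). -/
abbrev Wiring := Set UFlow

/-- Product of wirings: pointwise product of flows, where defined. -/
def wmul (F G : Wiring) : Wiring := {h | ∃ f ∈ F, ∃ g ∈ G, IsProd f g h}

/-- The unit wiring `I = x ⊸ x`. -/
def wI : Wiring := {f | FlowEquiv (.var 0, .var 0) f}

/-- Powers of a wiring. -/
def wpow (F : Wiring) : ℕ → Wiring
  | 0 => wI
  | n + 1 => wmul F (wpow F n)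

/-- Equality of wirings up to renaming of each flow. -/
def WEq (F G : Wiring) : Prop :=
  (∀ f ∈ F, ∃ g ∈ G, FlowEquiv f g) ∧ ∀ g ∈ G, ∃ f ∈ F, FlowEquiv f g

/-- A fact: a flow of the form `t ⊸ t` with `t` closed. -/
def IsFact (f : UFlow) : Prop := Closed f.1 ∧ f.2 = f.1

/-- Application of a wiring to (the fact associated with) a closed term:
the set of product flows. -/
def appF (F : Wiring) (t : Tm) : Set UFlow := {h | ∃ f ∈ F, IsProd f (t, t) h}

/-- Application of a wiring to a fact, keeping the facts produced. -/
def factApp (F : Wiring) (t : Tm) : Set Tm := {v | ∃ f ∈ F, IsProd f (t, t) (v, v)}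

/-- A wiring is deterministic if it produces at most one fact from any fact. -/
def Deterministic (F : Wiring) : Prop := ∀ t, Closed t → (appF F t).Subsingleton

/-- Two terms are matchable if renamings of them with disjoint variables are unifiable. -/
def Matchable (t u : Tm) : Prop :=
  ∃ (π π' : ℕ ≃ ℕ), tvars (rename π t) ∩ tvars (rename π' u) = ∅ ∧
    ∃ θ, Finitary θ ∧ Unifies θ (rename π t) (rename π' u)

/-- A flow is balanced if each variable has all its occurrences at the same height. -/
def BalancedF (f : UFlow) : Prop :=
  ∀ x, ∀ n ∈ occs x f.1 ++ occs x f.2, ∀ m ∈ occs x f.1 ++ occs x f.2, n = m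

/-- Height of a flow. -/
def heightF (f : UFlow) : ℕ := max f.1.height f.2.height

/-- A wiring is balanced if all its flows are. -/
def BalancedW (F : Wiring) : Prop := ∀ f ∈ F, BalancedF f

/-- Height of a wiring: maximal height of its flows. -/
noncomputable def heightW (F : Wiring) : ℕ := sSup (heightF '' F)

/-- The computation space of a wiring `F`: closed terms (identified with the
corresponding facts) of height at most `heightW F` built using only symbols
(with their arities) occurring in `F` and the constant `⋆` (symbol `0`). -/
noncomputable def compSpace (F : Wiring) : Set Tm :=
  {t | Closed t ∧ t.height ≤ heightW F ∧
    ∀ q ∈ t.symar, q = (0, 0) ∨ ∃ f ∈ F, q ∈ f.1.symar ++ f.2.symar}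

/-- Nilpotency of a wiring: some power is the empty wiring. -/
def Nilpotent (F : Wiring) : Prop := ∃ n, 0 < n ∧ wpow F n = ∅

/-- Edges of the computation graph of `F`: from `u` to `v` iff `v ∈ F u`. -/
noncomputable def Edge (F : Wiring) (u v : Tm) : Prop :=
  u ∈ compSpace F ∧ v ∈ compSpace F ∧ v ∈ factApp F u

/-- Acyclicity of the computation graph of `F`. -/
noncomputable def AcyclicCG (F : Wiring) : Prop :=
  ¬ ∃ n, 0 < n ∧ ∃ c : ℕ → Tm, (∀ i < n, Edge F (c i) (c (i + 1))) ∧ c n = c 0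

/-!
The additive laws are those of set union, and distributivity and the absorbing `∅` hold because
the product of wirings is taken flow by flow. For the unit laws, a fresh `x ⊸ x` meets `t ⊸ u`
through the most general unifier `x ↦ t`, which gives back `t ⊸ u`.

For associativity, an mgu of the first junction followed by an mgu of the instantiated second
junction is an mgu of the system of both junctions. As mgus are unique up to renaming, each
bracketing of `f g h` agrees up to renaming with the flow computed from one mgu of that system
(`IsProd3`); going back from it to a bracketing needs mgus to exist, which is Martelli–Montanari
unification. Reversing all flows (`Prod.swap`) exchanges the two bracketings.
-/

/-! ### Terms and substitutions -/

namespace Tm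

@[induction_eliminator]
theorem ind {motive : Tm → Prop} (var : ∀ x, motive (.var x))
    (app : ∀ f ts, (∀ t ∈ ts, motive t) → motive (.app f ts)) : ∀ t, motive t
  | .var x => var x
  | .app f ts => app f ts fun t _ => ind var app t

@[simp] theorem subst_var (σ : ℕ → Tm) (x : ℕ) : subst σ (.var x) = σ x := by
  rw [subst]

@[simp] theorem subst_app (σ : ℕ → Tm) (f : ℕ) (ts : List Tm) :
    subst σ (.app f ts) = .app f (ts.map (subst σ)) := by
  rw [subst]; simp

@[simp] theorem varsL_var (x : ℕ) : varsL (.var x) = [x] := by rw [varsL]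

@[simp] theorem varsL_app (f : ℕ) (ts : List Tm) : varsL (.app f ts) = ts.flatMap varsL := by
  rw [varsL]; simp

theorem subst_congr {σ τ : ℕ → Tm} {t : Tm} (h : ∀ x ∈ varsL t, σ x = τ x) :
    subst σ t = subst τ t := by
  induction t with
  | var x => simpa using h x
  | app f ts ih =>
    simp only [subst_app, app.injEq, true_and]
    exact List.map_congr_left fun t ht =>
      ih t ht fun x hx => h x (by rw [varsL_app]; exact List.mem_flatMap.2 ⟨t, ht, hx⟩)

@[simp] theorem subst_var_eq_self (t : Tm) : subst .var t = t := by
  induction t with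
  | var x => simp
  | app f ts ih => simpa using List.map_congr_left ih

theorem subst_eq_self {σ : ℕ → Tm} {t : Tm} (h : ∀ x ∈ varsL t, σ x = .var x) :
    subst σ t = t := by
  rw [subst_congr h, subst_var_eq_self]

theorem subst_subst (σ τ : ℕ → Tm) (t : Tm) : subst σ (subst τ t) = subst (subst σ ∘ τ) t := by
  induction t with
  | var x => simp
  | app f ts ih => simpa using List.map_congr_left ih

theorem mem_varsL_subst {σ : ℕ → Tm} {t : Tm} {x : ℕ} :
    x ∈ varsL (subst σ t) ↔ ∃ y ∈ varsL t, x ∈ varsL (σ y) := by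
  induction t with
  | var y => simp
  | app f ts ih =>
    simp only [subst_app, varsL_app, List.flatMap_map, List.mem_flatMap]
    constructor
    · rintro ⟨u, hu, hx⟩
      obtain ⟨y, hy, hxy⟩ := (ih u hu).1 hx
      exact ⟨y, ⟨u, hu, hy⟩, hxy⟩
    · rintro ⟨y, ⟨u, hu, hy⟩, hxy⟩
      exact ⟨u, hu, (ih u hu).2 ⟨y, hy, hxy⟩⟩

def size : Tm → ℕ
  | .var _ => 1
  | .app _ ts => 1 + (ts.attach.map fun ⟨t, _⟩ => size t).sum

@[simp] theorem size_var (x : ℕ) : size (.var x) = 1 := by rw [size]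

@[simp] theorem size_app (f : ℕ) (ts : List Tm) : size (.app f ts) = 1 + (ts.map size).sum := by
  rw [size]; simp

theorem size_lt_size_app {t : Tm} {f : ℕ} {ts : List Tm} (ht : t ∈ ts) :
    size t < size (.app f ts) := by
  have := List.le_sum_of_mem (List.mem_map_of_mem (f := size) ht)
  simp only [size_app]
  omega

theorem size_le_size_subst {σ : ℕ → Tm} {u : Tm} {x : ℕ} (hx : x ∈ varsL u) :
    size (σ x) ≤ size (subst σ u) := by
  induction u with
  | var y => simp_all
  | app f ts ih =>
    obtain ⟨t, ht, hxt⟩ := List.mem_flatMap.1 (by simpa using hx)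
    calc size (σ x) ≤ size (subst σ t) := ih t ht hxt
      _ ≤ size (subst σ (.app f ts)) := by
        rw [subst_app]; exact (size_lt_size_app (List.mem_map_of_mem ht)).le

theorem notMem_varsL_of_subst_eq {σ : ℕ → Tm} {x : ℕ} {u : Tm} (hu : u ≠ .var x)
    (h : σ x = subst σ u) : x ∉ varsL u := by
  intro hx
  cases u with
  | var y => simp_all
  | app f ts =>
    obtain ⟨t, ht, hxt⟩ := List.mem_flatMap.1 (by simpa using hx)
    have := (size_le_size_subst (σ := σ) hxt).trans_lt
      (size_lt_size_app (f := f) (List.mem_map_of_mem (f := subst σ) ht))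
    rw [← subst_app, ← h] at this
    exact this.false

end Tm

theorem finitary_var : Finitary Tm.var := by simp [Finitary]

theorem Finitary.comp {σ τ : ℕ → Tm} (hσ : Finitary σ) (hτ : Finitary τ) :
    Finitary (subst σ ∘ τ) := by
  refine (hσ.union hτ).subset fun x hx => ?_
  by_contra hmem
  simp only [Set.mem_union, Set.mem_ofPred_eq, not_or, not_not] at hmem
  simp [hmem.1, hmem.2] at hx

theorem Finitary.perm_symm {π : Equiv.Perm ℕ} (hπ : Finitary fun x => .var (π x)) :
    Finitary fun x => .var (π.symm x) :=
  (hπ.image π).subset fun x hx => by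
    refine ⟨π.symm x, fun h => hx ?_, by simp⟩
    simp only [Tm.var.injEq, Equiv.apply_symm_apply] at h ⊢
    exact h.symm

theorem Finitary.comp_perm {θ : ℕ → Tm} {π : Equiv.Perm ℕ} (hθ : Finitary θ)
    (hπ : Finitary fun x => .var (π x)) : Finitary (θ ∘ π) := by
  refine (hπ.union (hθ.preimage π.injective.injOn)).subset fun x hx => ?_
  by_contra hmem
  simp only [Set.mem_union, Set.mem_preimage, Set.mem_ofPred_eq, not_or, not_not,
    Tm.var.injEq] at hmem
  simp only [Set.mem_ofPred_eq, Function.comp_apply, hmem.1] at hx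
  exact hx (hmem.1 ▸ hmem.2)

theorem finitary_update_var (x : ℕ) (u : Tm) : Finitary (Function.update Tm.var x u) :=
  (Set.finite_singleton x).subset fun z hz => by
    by_contra h
    exact hz (Function.update_of_ne h _ _)

/-- Unification only produces substitutions supported in the variables of the system; this is what
makes the mgu of one junction fix the variables of a third, renamed-apart flow. -/
def SupportedIn (θ : ℕ → Tm) (V : Set ℕ) : Prop :=
  ∀ x, θ x ≠ .var x → x ∈ V ∧ ∀ y ∈ varsL (θ x), y ∈ V

namespace SupportedIn

variable {θ : ℕ → Tm} {V : Set ℕ}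

theorem mono (h : SupportedIn θ V) {W : Set ℕ} (hVW : V ⊆ W) : SupportedIn θ W :=
  fun x hx => ⟨hVW (h x hx).1, fun y hy => hVW ((h x hx).2 y hy)⟩

theorem subst_eq_self (h : SupportedIn θ V) {t : Tm} (ht : ∀ x ∈ varsL t, x ∉ V) :
    subst θ t = t :=
  Tm.subst_eq_self fun x hx => by_contra fun hne => ht x hx (h x hne).1

theorem mem_varsL_subst (h : SupportedIn θ V) {t : Tm} {y : ℕ} (hy : y ∈ varsL (subst θ t)) :
    y ∈ varsL t ∨ y ∈ V := by
  obtain ⟨z, hz, hyz⟩ := Tm.mem_varsL_subst.1 hy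
  by_cases hθz : θ z = .var z
  · rw [hθz, varsL_var, List.mem_singleton] at hyz
    exact Or.inl (hyz ▸ hz)
  · exact Or.inr ((h z hθz).2 y hyz)

end SupportedIn

theorem SupportedIn.comp {θ₁ θ₂ : ℕ → Tm} {V : Set ℕ} (h₁ : SupportedIn θ₁ V)
    (h₂ : SupportedIn θ₂ V) : SupportedIn (subst θ₁ ∘ θ₂) V := by
  intro z hz
  by_cases hθ₂ : θ₂ z = .var z
  · simp only [Function.comp_apply, hθ₂, Tm.subst_var] at hz ⊢
    exact h₁ z hz
  · refine ⟨(h₂ z hθ₂).1, fun y hy => ?_⟩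
    rcases h₁.mem_varsL_subst hy with hy | hy
    exacts [(h₂ z hθ₂).2 y hy, hy]

theorem supportedIn_update_var {x : ℕ} {u : Tm} {V : Set ℕ} (hx : x ∈ V)
    (hu : ∀ y ∈ varsL u, y ∈ V) : SupportedIn (Function.update Tm.var x u) V := by
  intro z hz
  by_cases hzx : z = x
  · subst hzx
    simpa [hx] using hu
  · simp [hzx] at hz

theorem Finitary.exists_supportedIn {θ : ℕ → Tm} (hθ : Finitary θ) :
    ∃ V : Set ℕ, V.Finite ∧ SupportedIn θ V :=
  ⟨{x | θ x ≠ .var x} ∪ ⋃ x ∈ {x | θ x ≠ .var x}, {y | y ∈ varsL (θ x)},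
    hθ.union (hθ.biUnion fun x _ => (varsL (θ x)).finite_toSet),
    fun _ hx => ⟨.inl hx, fun _ hy => .inr (Set.mem_biUnion hx hy)⟩⟩

theorem exists_perm_extend {s : Set ℕ} (hs : s.Finite) {f : ℕ → ℕ} (hf : Set.InjOn f s) :
    ∃ π : Equiv.Perm ℕ, (∀ x ∈ s, π x = f x) ∧ Finitary fun x => .var (π x) := by
  classical
  set u : Finset ℕ := hs.toFinset ∪ hs.toFinset.image f
  have := hs.to_subtype
  obtain ⟨σ, hσ⟩ := Equiv.Perm.exists_extending_pair (α := s) (β := u)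
    (fun x => ⟨x, by simp [u]⟩) (fun x => ⟨f x, by simp [u]; exact .inr ⟨x, x.2, rfl⟩⟩)
    (fun x y h => Subtype.ext (by simpa using h))
    (fun x y h => Subtype.ext (hf x.2 y.2 (by simpa using h)))
  refine ⟨Equiv.Perm.ofSubtype σ, fun x hx => ?_, u.finite_toSet.subset fun x hx => ?_⟩
  · rw [Equiv.Perm.ofSubtype_apply_of_mem σ (by simp [u, hx])]
    exact congrArg Subtype.val (hσ ⟨x, hx⟩)
  · by_contra hxu
    exact hx (congrArg Tm.var (Equiv.Perm.ofSubtype_apply_of_not_mem σ hxu))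

theorem exists_perm_fix_avoid {T S B : Set ℕ} (hT : T.Finite) (hS : S.Finite) (hB : B.Finite)
    (hST : Disjoint S T) :
    ∃ π : Equiv.Perm ℕ, (Finitary fun x => .var (π x)) ∧ (∀ x ∈ T, π x = x) ∧
      ∀ x ∈ S, π x ∉ B := by
  classical
  obtain ⟨N, hN⟩ := ((hS.union hT).union hB).bddAbove
  let g : ℕ → ℕ := fun x => if x ∈ T then x else x + N + 1
  have hlt : ∀ x ∈ S ∪ T ∪ B, x < N + 1 := fun x hx => Nat.lt_succ_of_le (hN hx)
  have hinj : Set.InjOn g (T ∪ S) := by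
    intro x hx y hy hxy
    have := hlt x (by rcases hx with h | h <;> simp [h])
    have := hlt y (by rcases hy with h | h <;> simp [h])
    by_cases hxT : x ∈ T <;> by_cases hyT : y ∈ T <;>
      simp only [g, hxT, hyT, if_true, if_false] at hxy <;> omega
  obtain ⟨π, hπ, hfin⟩ := exists_perm_extend (hT.union hS) hinj
  refine ⟨π, hfin, fun x hx => by simp [hπ x (.inl hx), g, hx], fun x hx hxB => ?_⟩
  have := hlt _ (.inr hxB)
  rw [hπ x (.inr hx)] at this
  simp [g, hST.notMem_of_mem_left hx] at this

/-! ### Flows up to renaming -/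

@[simp] theorem rename_eq_subst (π : ℕ ≃ ℕ) (t : Tm) :
    rename π t = subst (fun x => .var (π x)) t := rfl

theorem mem_varsL_rename {π : ℕ ≃ ℕ} {t : Tm} {x : ℕ} :
    x ∈ varsL (rename π t) ↔ ∃ y ∈ varsL t, π y = x := by
  simp [Tm.mem_varsL_subst, eq_comm]

theorem flowVars_finite (f : UFlow) : (flowVars f).Finite :=
  f.1.varsL.finite_toSet.union f.2.varsL.finite_toSet

theorem mem_flowVars {x : ℕ} {f : UFlow} : x ∈ flowVars f ↔ x ∈ varsL f.1 ∨ x ∈ varsL f.2 :=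
  Iff.rfl

@[simp] theorem flowVars_swap (f : UFlow) : flowVars f.swap = flowVars f :=
  Set.union_comm _ _

theorem flowVars_map_rename (κ : Equiv.Perm ℕ) (f : UFlow) :
    flowVars (Prod.map (rename κ) (rename κ) f) = κ '' flowVars f := by
  ext x
  simp only [mem_flowVars, Prod.map_fst, Prod.map_snd, mem_varsL_rename, Set.mem_image]
  constructor
  · rintro (⟨y, hy, rfl⟩ | ⟨y, hy, rfl⟩)
    exacts [⟨y, .inl hy, rfl⟩, ⟨y, .inr hy, rfl⟩]
  · rintro ⟨y, hy | hy, rfl⟩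
    exacts [.inl ⟨y, hy, rfl⟩, .inr ⟨y, hy, rfl⟩]

namespace FlowEquiv

variable {f g h : UFlow}

@[refl] theorem refl (f : UFlow) : FlowEquiv f f :=
  ⟨Equiv.refl ℕ, by simp, by simp⟩

theorem symm (hfg : FlowEquiv f g) : FlowEquiv g f := by
  obtain ⟨π, h1, h2⟩ := hfg
  exact ⟨π.symm, by simp [← h1, Tm.subst_subst, Function.comp_def],
    by simp [← h2, Tm.subst_subst, Function.comp_def]⟩

theorem trans (hfg : FlowEquiv f g) (hgh : FlowEquiv g h) : FlowEquiv f h := by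
  obtain ⟨π, hπ1, hπ2⟩ := hfg
  obtain ⟨τ, hτ1, hτ2⟩ := hgh
  exact ⟨π.trans τ, by simp [← hτ1, ← hπ1, Tm.subst_subst, Function.comp_def],
    by simp [← hτ2, ← hπ2, Tm.subst_subst, Function.comp_def]⟩

theorem swap (hfg : FlowEquiv f g) : FlowEquiv f.swap g.swap :=
  let ⟨π, h1, h2⟩ := hfg
  ⟨π, h2, h1⟩

theorem exists_finitary (hfg : FlowEquiv f g) : ∃ π : Equiv.Perm ℕ,
    (Finitary fun x => .var (π x)) ∧ rename π f.1 = g.1 ∧ rename π f.2 = g.2 := by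
  obtain ⟨π₀, h1, h2⟩ := hfg
  obtain ⟨π, hπ, hfin⟩ := exists_perm_extend (flowVars_finite f) π₀.injective.injOn
  refine ⟨π, hfin, ?_, ?_⟩
  · rw [← h1]
    exact Tm.subst_congr fun x hx => by rw [hπ x (.inl hx)]
  · rw [← h2]
    exact Tm.subst_congr fun x hx => by rw [hπ x (.inr hx)]

end FlowEquiv

/-! ### Most general unifiers -/

def UnifiesAll (σ : ℕ → Tm) (E : List (Tm × Tm)) : Prop :=
  ∀ p ∈ E, subst σ p.1 = subst σ p.2

def IsMGUAll (θ : ℕ → Tm) (E : List (Tm × Tm)) : Prop :=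
  Finitary θ ∧ UnifiesAll θ E ∧
    ∀ σ, Finitary σ → UnifiesAll σ E → ∃ ρ, Finitary ρ ∧ ∀ x, σ x = subst ρ (θ x)

def substSys (σ : ℕ → Tm) (E : List (Tm × Tm)) : List (Tm × Tm) :=
  E.map (Prod.map (subst σ) (subst σ))

section Unifiers

variable {σ τ θ : ℕ → Tm} {t u : Tm} {x : ℕ} {E E' : List (Tm × Tm)}

@[simp] theorem unifiesAll_nil : UnifiesAll σ [] := by simp [UnifiesAll]

@[simp] theorem unifiesAll_cons :
    UnifiesAll σ ((t, u) :: E) ↔ subst σ t = subst σ u ∧ UnifiesAll σ E := by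
  simp [UnifiesAll]

@[simp] theorem unifiesAll_append {E₁ E₂ : List (Tm × Tm)} :
    UnifiesAll σ (E₁ ++ E₂) ↔ UnifiesAll σ E₁ ∧ UnifiesAll σ E₂ := by
  simp [UnifiesAll, or_imp, forall_and]

theorem IsMGUAll.congr (hE : ∀ σ, UnifiesAll σ E ↔ UnifiesAll σ E') (h : IsMGUAll θ E) :
    IsMGUAll θ E' :=
  ⟨h.1, (hE θ).1 h.2.1, fun σ hσ hu => h.2.2 σ hσ ((hE σ).2 hu)⟩

theorem isMGU_iff_isMGUAll : IsMGU θ t u ↔ IsMGUAll θ [(t, u)] := by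
  simp [IsMGU, IsMGUAll, Unifies]

theorem IsMGU.symm (h : IsMGU θ t u) : IsMGU θ u t := by
  rw [isMGU_iff_isMGUAll] at h ⊢
  exact h.congr fun σ => by simp [eq_comm]

theorem unifiesAll_substSys : UnifiesAll σ (substSys τ E) ↔ UnifiesAll (subst σ ∘ τ) E := by
  simp only [substSys, UnifiesAll, List.forall_mem_map, Prod.map_fst, Prod.map_snd,
    Tm.subst_subst]

theorem IsMGUAll.append {θ₁ θ₂ : ℕ → Tm} {E₁ E₂ : List (Tm × Tm)} (h₁ : IsMGUAll θ₁ E₁)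
    (h₂ : IsMGUAll θ₂ (substSys θ₁ E₂)) : IsMGUAll (subst θ₂ ∘ θ₁) (E₁ ++ E₂) := by
  refine ⟨h₂.1.comp h₁.1, unifiesAll_append.2 ⟨fun p hp => ?_, unifiesAll_substSys.1 h₂.2.1⟩,
    fun σ hσ hu => ?_⟩
  · simp only [← Tm.subst_subst, h₁.2.1 p hp]
  obtain ⟨ρ, hρ, hσρ⟩ := h₁.2.2 σ hσ (unifiesAll_append.1 hu).1
  have hσ_eq : σ = subst ρ ∘ θ₁ := funext hσρ
  obtain ⟨ρ', hρ', hρρ'⟩ :=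
    h₂.2.2 ρ hρ (unifiesAll_substSys.2 (hσ_eq ▸ (unifiesAll_append.1 hu).2))
  refine ⟨ρ', hρ', fun x => ?_⟩
  rw [hσρ x, Function.comp_apply, Tm.subst_subst]
  exact Tm.subst_congr fun y _ => hρρ' y

theorem subst_comp_update_var (h : σ x = subst σ u) : subst σ ∘ Function.update Tm.var x u = σ := by
  funext z
  by_cases hz : z = x
  · subst hz; simp [h]
  · simp [hz]

theorem subst_update_var_of_notMem (hx : x ∉ varsL t) :
    subst (Function.update Tm.var x u) t = t :=
  Tm.subst_eq_self fun z hz => Function.update_of_ne (fun h => hx (by rwa [← h])) _ _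

theorem isMGUAll_update_var (hx : x ∉ varsL u) :
    IsMGUAll (Function.update Tm.var x u) [(.var x, u)] := by
  refine ⟨finitary_update_var x u, by simp [subst_update_var_of_notMem hx],
    fun σ hσ hσu => ⟨σ, hσ, fun z => ?_⟩⟩
  exact (congrFun (subst_comp_update_var (by simpa using hσu)) z).symm

end Unifiers

section Rename

variable {θ : ℕ → Tm} {π : Equiv.Perm ℕ} {E : List (Tm × Tm)}

theorem subst_rename_comp (t : Tm) : subst (rename π ∘ θ) t = rename π (subst θ t) := by
  simp [Tm.subst_subst, Function.comp_def]

theorem subst_comp_perm_rename (t : Tm) : subst (θ ∘ π.symm) (rename π t) = subst θ t := by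
  simp [Tm.subst_subst, Function.comp_def]

theorem IsMGUAll.rename_comp (hπ : Finitary fun x => .var (π x)) (h : IsMGUAll θ E) :
    IsMGUAll (rename π ∘ θ) E := by
  refine ⟨hπ.comp h.1, fun p hp => by simp only [subst_rename_comp, h.2.1 p hp],
    fun σ hσ hu => ?_⟩
  obtain ⟨ρ, hρ, hσρ⟩ := h.2.2 σ hσ hu
  exact ⟨ρ ∘ π.symm, hρ.comp_perm hπ.perm_symm, fun x => by
    rw [hσρ, Function.comp_apply, subst_comp_perm_rename]⟩

theorem IsMGUAll.comp_perm_symm (hπ : Finitary fun x => .var (π x)) (h : IsMGUAll θ E) :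
    IsMGUAll (θ ∘ π.symm) (substSys (fun x => .var (π x)) E) := by
  have hθ : (subst (θ ∘ π.symm) ∘ fun x => .var (π x)) = θ := funext fun x => by simp
  refine ⟨h.1.comp_perm hπ.perm_symm, by rw [unifiesAll_substSys, hθ]; exact h.2.1,
    fun σ hσ hu => ?_⟩
  obtain ⟨ρ, hρ, hσρ⟩ := h.2.2 _ (hσ.comp hπ) (unifiesAll_substSys.1 hu)
  exact ⟨ρ, hρ, fun x => by simpa using hσρ (π.symm x)⟩

end Rename

theorem SupportedIn.conj {θ : ℕ → Tm} {V : Set ℕ} (h : SupportedIn θ V) (π : Equiv.Perm ℕ) :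
    SupportedIn (rename π ∘ θ ∘ π.symm) (π '' V) := by
  intro z hz
  have hθ : θ (π.symm z) ≠ .var (π.symm z) := fun h' => hz (by simp [h'])
  refine ⟨⟨π.symm z, (h _ hθ).1, by simp⟩, fun y hy => ?_⟩
  obtain ⟨w, hw, rfl⟩ := mem_varsL_rename.1 hy
  exact ⟨w, (h _ hθ).2 w hw, rfl⟩

theorem exists_var_of_subst_subst_eq_self {σ₁ σ₂ : ℕ → Tm} {t : Tm}
    (h : subst σ₂ (subst σ₁ t) = t) : ∀ x ∈ varsL t, ∃ y, σ₁ x = .var y ∧ σ₂ y = .var x := by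
  induction t with
  | var x =>
    intro z hz
    obtain rfl : z = x := by simpa using hz
    rw [Tm.subst_var] at h
    cases hσ : σ₁ z with
    | var y => exact ⟨y, rfl, by simpa [hσ] using h⟩
    | app f ts => simp [hσ] at h
  | app f ts ih =>
    intro x hx
    obtain ⟨t, ht, hxt⟩ := List.mem_flatMap.1 (by simpa using hx)
    simp only [Tm.subst_app, List.map_map, Tm.app.injEq, true_and] at h
    exact ih t ht ((List.map_inj_left.1 (h.trans (List.map_id ts).symm)) t ht) x hxt

/-- Each of the two unifiers is an instance of the other, so on the variables of the unified terms
the two instantiations are inverse renamings. -/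
theorem IsMGUAll.flowEquiv {θ τ : ℕ → Tm} {E : List (Tm × Tm)} (hθ : IsMGUAll θ E)
    (hτ : IsMGUAll τ E) (a b : Tm) :
    FlowEquiv (subst θ a, subst θ b) (subst τ a, subst τ b) := by
  obtain ⟨ρ, -, hθτ⟩ := hτ.2.2 θ hθ.1 hθ.2.1
  obtain ⟨ρ', -, hτθ⟩ := hθ.2.2 τ hτ.1 hτ.2.1
  have hτθ' (c : Tm) : subst τ c = subst ρ' (subst θ c) := by
    rw [Tm.subst_subst]; exact Tm.subst_congr fun x _ => hτθ x
  have hθτ' (c : Tm) : subst ρ (subst ρ' (subst θ c)) = subst θ c := by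
    rw [← hτθ', Tm.subst_subst]; exact Tm.subst_congr fun x _ => (hθτ x).symm
  have hvar : ∀ x ∈ flowVars (subst θ a, subst θ b), ∃ y, ρ' x = .var y ∧ ρ y = .var x := by
    rintro x (hx | hx)
    exacts [exists_var_of_subst_subst_eq_self (hθτ' a) x hx,
      exists_var_of_subst_subst_eq_self (hθτ' b) x hx]
  choose! g hg using hvar
  have hinj : Set.InjOn g (flowVars (subst θ a, subst θ b)) := fun x hx y hy hxy =>
    Tm.var.inj (((hg x hx).2.symm.trans (congrArg ρ hxy)).trans (hg y hy).2)
  obtain ⟨π, hπ, -⟩ := exists_perm_extend (flowVars_finite _) hinj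
  refine ⟨π, ?_, ?_⟩ <;> dsimp only <;> rw [rename_eq_subst, hτθ'] <;>
    refine Tm.subst_congr fun x hx => ?_
  · rw [hπ x (.inl hx), (hg x (.inl hx)).1]
  · rw [hπ x (.inr hx), (hg x (.inr hx)).1]

/-! ### Unification -/

def sysVars (E : List (Tm × Tm)) : Finset ℕ :=
  (E.flatMap fun p => varsL p.1 ++ varsL p.2).toFinset

def sysSize (E : List (Tm × Tm)) : ℕ :=
  (E.map fun p => Tm.size p.1 + Tm.size p.2).sum

/-- Termination measure of the Martelli–Montanari algorithm: eliminating a variable lowers the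
first component; deleting or decomposing an equation lowers the second and not the first. -/
def sysMeasure (E : List (Tm × Tm)) : ℕ ×ₗ ℕ :=
  toLex ((sysVars E).card, sysSize E)

section Measure

variable {t u : Tm} {x : ℕ} {E E' : List (Tm × Tm)}

theorem mem_sysVars {y : ℕ} : y ∈ sysVars E ↔ ∃ p ∈ E, y ∈ varsL p.1 ∨ y ∈ varsL p.2 := by
  simp [sysVars]

@[simp] theorem sysVars_nil : sysVars [] = ∅ := rfl

@[simp] theorem mem_sysVars_cons {y : ℕ} :
    y ∈ sysVars ((t, u) :: E) ↔ y ∈ varsL t ∨ y ∈ varsL u ∨ y ∈ sysVars E := by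
  simp [sysVars]

theorem sysVars_cons_comm : sysVars ((u, t) :: E) = sysVars ((t, u) :: E) := by
  ext; simp only [mem_sysVars_cons]; tauto

theorem sysMeasure_cons_comm : sysMeasure ((u, t) :: E) = sysMeasure ((t, u) :: E) := by
  simp only [sysMeasure, sysVars_cons_comm, sysSize, List.map_cons, List.sum_cons,
    add_comm (Tm.size u)]

theorem sysMeasure_lt_of_subset (hV : sysVars E' ⊆ sysVars E) (hs : sysSize E' < sysSize E) :
    sysMeasure E' < sysMeasure E :=
  Prod.Lex.toLex_lt_toLex'.2 ⟨Finset.card_le_card hV, fun _ => hs⟩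

theorem sysMeasure_lt_of_card_lt (h : (sysVars E').card < (sysVars E).card) :
    sysMeasure E' < sysMeasure E :=
  Prod.Lex.toLex_lt_toLex.2 (.inl h)

theorem sysMeasure_lt_cons : sysMeasure E < sysMeasure ((t, u) :: E) := by
  refine sysMeasure_lt_of_subset (fun y hy => mem_sysVars_cons.2 (.inr (.inr hy))) ?_
  cases t <;> simp [sysSize]

theorem mem_varsL_subst_update {s : Tm} {y : ℕ} (hx : x ∉ varsL u)
    (hy : y ∈ varsL (subst (Function.update Tm.var x u) s)) :
    y ≠ x ∧ (y ∈ varsL s ∨ y ∈ varsL u) := by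
  obtain ⟨z, hz, hyz⟩ := Tm.mem_varsL_subst.1 hy
  by_cases hzx : z = x
  · subst hzx
    rw [Function.update_self] at hyz
    exact ⟨fun h => hx (h ▸ hyz), .inr hyz⟩
  · rw [Function.update_of_ne hzx, varsL_var, List.mem_singleton] at hyz
    exact ⟨hyz ▸ hzx, .inl (hyz ▸ hz)⟩

theorem sysVars_substSys_update_subset (hx : x ∉ varsL u) :
    sysVars (substSys (Function.update Tm.var x u) E) ⊆ (sysVars ((.var x, u) :: E)).erase x := by
  intro y hy
  obtain ⟨p, hp, hyp⟩ := mem_sysVars.1 hy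
  obtain ⟨q, hq, rfl⟩ := List.mem_map.1 hp
  rw [Finset.mem_erase, mem_sysVars_cons]
  rcases hyp with h | h <;> obtain ⟨hne, h | h⟩ := mem_varsL_subst_update hx h
  · exact ⟨hne, .inr (.inr (mem_sysVars.2 ⟨q, hq, .inl h⟩))⟩
  · exact ⟨hne, .inr (.inl h)⟩
  · exact ⟨hne, .inr (.inr (mem_sysVars.2 ⟨q, hq, .inr h⟩))⟩
  · exact ⟨hne, .inr (.inl h)⟩

theorem sysMeasure_substSys_update_lt (hx : x ∉ varsL u) :
    sysMeasure (substSys (Function.update Tm.var x u) E) < sysMeasure ((.var x, u) :: E) := by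
  exact sysMeasure_lt_of_card_lt <|
    (Finset.card_le_card (sysVars_substSys_update_subset hx)).trans_lt
      (Finset.card_erase_lt_of_mem (by simp))

end Measure

section Decompose

variable {σ : ℕ → Tm} {f g : ℕ} {ts us : List Tm} {E : List (Tm × Tm)}

theorem map_subst_eq_iff_unifiesAll_zip (hlen : ts.length = us.length) :
    ts.map (subst σ) = us.map (subst σ) ↔ UnifiesAll σ (ts.zip us) := by
  induction ts generalizing us with
  | nil => cases us <;> simp_all
  | cons t ts ih =>
    cases us with
    | nil => simp at hlen
    | cons u us => simp [ih (Nat.succ_injective hlen)]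

theorem sysVars_zip_append_subset :
    sysVars (ts.zip us ++ E) ⊆ sysVars ((.app f ts, .app g us) :: E) := by
  intro y hy
  obtain ⟨p, hp, hyp⟩ := mem_sysVars.1 hy
  rw [mem_sysVars_cons, varsL_app, varsL_app, List.mem_flatMap, List.mem_flatMap]
  rcases List.mem_append.1 hp with hp | hp
  · obtain ⟨h₁, h₂⟩ := List.of_mem_zip hp
    rcases hyp with h | h
    exacts [.inl ⟨_, h₁, h⟩, .inr (.inl ⟨_, h₂, h⟩)]
  · exact .inr (.inr (mem_sysVars.2 ⟨p, hp, hyp⟩))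

theorem sysSize_zip_le : sysSize (ts.zip us) ≤ (ts.map Tm.size).sum + (us.map Tm.size).sum := by
  induction ts generalizing us with
  | nil => simp [sysSize]
  | cons t ts ih =>
    cases us with
    | nil => simp [sysSize]
    | cons u us =>
      have := ih (us := us)
      simp only [sysSize, List.zip_cons_cons, List.map_cons, List.sum_cons] at this ⊢
      omega

theorem sysMeasure_zip_append_lt :
    sysMeasure (ts.zip us ++ E) < sysMeasure ((.app f ts, .app g us) :: E) := by
  refine sysMeasure_lt_of_subset sysVars_zip_append_subset ?_
  have := sysSize_zip_le (ts := ts) (us := us)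
  simp only [sysSize, List.map_append, List.sum_append, List.map_cons, List.sum_cons,
    Tm.size_app] at this ⊢
  omega

end Decompose

theorem exists_isMGUAll_cons_var {x : ℕ} {u : Tm} {E : List (Tm × Tm)} (hx : x ∉ varsL u)
    (h : ∃ θ, IsMGUAll θ (substSys (Function.update Tm.var x u) E) ∧
      SupportedIn θ (sysVars (substSys (Function.update Tm.var x u) E))) :
    ∃ θ, IsMGUAll θ ((.var x, u) :: E) ∧ SupportedIn θ (sysVars ((.var x, u) :: E)) := by
  obtain ⟨θ, hθ, hθV⟩ := h
  refine ⟨_, (isMGUAll_update_var hx).append hθ, SupportedIn.comp ?_ ?_⟩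
  · exact hθV.mono fun y hy => Finset.mem_of_mem_erase (sysVars_substSys_update_subset hx hy)
  · exact supportedIn_update_var (by simp) fun y hy => by simp [hy]

theorem exists_isMGUAll (E : List (Tm × Tm)) (hE : ∃ σ, Finitary σ ∧ UnifiesAll σ E) :
    ∃ θ, IsMGUAll θ E ∧ SupportedIn θ (sysVars E) := by
  induction E using (InvImage.wf sysMeasure wellFounded_lt).induction with
  | h E ih => ?_
  obtain ⟨σ, hσ, hE⟩ := hE
  rcases E with _ | ⟨⟨t, u⟩, E⟩
  · exact ⟨Tm.var, ⟨finitary_var, unifiesAll_nil, fun σ hσ _ => ⟨σ, hσ, by simp⟩⟩,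
      fun x hx => (hx rfl).elim⟩
  rw [unifiesAll_cons] at hE
  by_cases htu : t = u
  · subst htu
    obtain ⟨θ, hθ, hθV⟩ := ih E sysMeasure_lt_cons ⟨σ, hσ, hE.2⟩
    exact ⟨θ, hθ.congr fun τ => by simp,
      hθV.mono fun y hy => mem_sysVars_cons.2 (.inr (.inr hy))⟩
  have elim : ∀ x v, v ≠ .var x → σ x = subst σ v →
      sysMeasure ((.var x, v) :: E) = sysMeasure ((t, u) :: E) →
      ∃ θ, IsMGUAll θ ((.var x, v) :: E) ∧ SupportedIn θ (sysVars ((.var x, v) :: E)) := by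
    intro x v hv hσv hm
    have hx := notMem_varsL_of_subst_eq hv hσv
    refine exists_isMGUAll_cons_var hx (ih _ ?_ ⟨σ, hσ, ?_⟩)
    · exact (sysMeasure_substSys_update_lt hx).trans_eq hm
    rw [unifiesAll_substSys, subst_comp_update_var hσv]
    exact hE.2
  rcases t with x | ⟨f, ts⟩
  · exact elim x u (Ne.symm htu) (by simpa using hE.1) rfl
  rcases u with y | ⟨g, us⟩
  · obtain ⟨θ, hθ, hθV⟩ := elim y (.app f ts) htu (by simpa using hE.1.symm)
      sysMeasure_cons_comm
    exact ⟨θ, hθ.congr fun τ => by simp [eq_comm], sysVars_cons_comm (E := E) ▸ hθV⟩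
  obtain ⟨rfl, hmap⟩ : f = g ∧ ts.map (subst σ) = us.map (subst σ) := by simpa using hE.1
  have hlen : ts.length = us.length := by simpa using congrArg List.length hmap
  have hiff : ∀ τ, UnifiesAll τ ((.app f ts, .app f us) :: E) ↔ UnifiesAll τ (ts.zip us ++ E) := by
    intro τ
    rw [unifiesAll_cons, unifiesAll_append, ← map_subst_eq_iff_unifiesAll_zip hlen]
    simp
  obtain ⟨θ, hθ, hθV⟩ := ih _ sysMeasure_zip_append_lt
    ⟨σ, hσ, (hiff σ).1 (unifiesAll_cons.2 ⟨by simp [hmap], hE.2⟩)⟩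
  exact ⟨θ, hθ.congr fun τ => (hiff τ).symm, hθV.mono sysVars_zip_append_subset⟩

theorem IsMGUAll.exists_append {σ₁ : ℕ → Tm} {E₁ E₂ : List (Tm × Tm)} (h₁ : IsMGUAll σ₁ E₁)
    (hE : ∃ σ, Finitary σ ∧ UnifiesAll σ (E₁ ++ E₂)) :
    ∃ σ₂, IsMGUAll σ₂ (substSys σ₁ E₂) ∧ IsMGUAll (subst σ₂ ∘ σ₁) (E₁ ++ E₂) := by
  obtain ⟨σ, hσ, hu⟩ := hE
  rw [unifiesAll_append] at hu
  obtain ⟨ρ, hρ, hσρ⟩ := h₁.2.2 σ hσ hu.1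
  have hρσ : subst ρ ∘ σ₁ = σ := funext fun x => (hσρ x).symm
  obtain ⟨σ₂, hσ₂, -⟩ := exists_isMGUAll (substSys σ₁ E₂)
    ⟨ρ, hρ, by rw [unifiesAll_substSys, hρσ]; exact hu.2⟩
  exact ⟨σ₂, hσ₂, h₁.append hσ₂⟩

/-! ### The semiring laws -/

theorem IsProd.swap {f g h : UFlow} (hp : IsProd f g h) : IsProd g.swap f.swap h.swap := by
  obtain ⟨f', g', θ, hf, hg, hdisj, hθ, rfl⟩ := hp
  exact ⟨g'.swap, f'.swap, θ, hg.swap, hf.swap, by rwa [flowVars_swap, flowVars_swap,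
    Set.inter_comm], hθ.symm, rfl⟩

theorem preimage_swap_wmul (F G : Wiring) :
    Prod.swap ⁻¹' wmul F G = wmul (Prod.swap ⁻¹' G) (Prod.swap ⁻¹' F) := by
  ext h
  constructor
  · rintro ⟨f, hf, g, hg, hp⟩
    exact ⟨g.swap, hg, f.swap, hf, hp.swap⟩
  · rintro ⟨g, hg, f, hf, hp⟩
    exact ⟨f.swap, hf, g.swap, hg, hp.swap⟩

theorem preimage_swap_wI : Prod.swap ⁻¹' wI = wI := by
  ext f
  exact ⟨fun h => h.swap, fun h => h.swap⟩

theorem WEq.of_preimage_swap {F G : Wiring} (h : WEq (Prod.swap ⁻¹' F) (Prod.swap ⁻¹' G)) :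
    WEq F G := by
  refine ⟨fun f hf => ?_, fun g hg => ?_⟩
  · obtain ⟨g, hg, e⟩ := h.1 f.swap hf
    exact ⟨g.swap, hg, e.swap⟩
  · obtain ⟨f, hf, e⟩ := h.2 g.swap hg
    exact ⟨f.swap, hf, e.swap⟩

theorem flowVars_var_var (b : ℕ) : flowVars (.var b, .var b) = {b} := by
  ext; simp [flowVars, tvars]

theorem FlowEquiv.exists_eq_var_var {x : ℕ} {f : UFlow} (h : FlowEquiv (.var x, .var x) f) :
    ∃ b, f = (.var b, .var b) := by
  obtain ⟨π, h1, h2⟩ := h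
  exact ⟨π x, Prod.ext (by simpa using h1.symm) (by simpa using h2.symm)⟩

theorem mem_wI_var_var (b : ℕ) : ((.var b, .var b) : UFlow) ∈ wI :=
  ⟨Equiv.swap 0 b, by simp, by simp⟩

theorem flowEquiv_of_isProd_wI {i g p : UFlow} (hi : i ∈ wI) (hp : IsProd i g p) :
    FlowEquiv p g := by
  obtain ⟨i', g', θ, hii', hgg', hdisj, hθ, rfl⟩ := hp
  obtain ⟨b, rfl⟩ := (FlowEquiv.trans hi hii').exists_eq_var_var
  have hb : b ∉ flowVars g' := fun hb => (Set.eq_empty_iff_forall_notMem.1 hdisj) b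
    ⟨by simp [flowVars_var_var], hb⟩
  have hb₁ : b ∉ varsL g'.1 := fun h => hb (.inl h)
  refine ((isMGU_iff_isMGUAll.1 hθ).flowEquiv (isMGUAll_update_var hb₁) (.var b) g'.2).trans ?_
  rw [Tm.subst_var, Function.update_self, subst_update_var_of_notMem fun h => hb (.inr h)]
  exact hgg'.symm

theorem exists_isProd_wI (g : UFlow) : ∃ i ∈ wI, IsProd i g g := by
  obtain ⟨b, hb⟩ := (flowVars_finite g).infinite_compl.nonempty
  have hb₁ : b ∉ varsL g.1 := fun h => hb (.inl h)
  refine ⟨(.var b, .var b), mem_wI_var_var b, _, _, _, .refl _, .refl g,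
    by simpa [flowVars_var_var] using hb, isMGU_iff_isMGUAll.2 (isMGUAll_update_var hb₁), ?_⟩
  rw [Tm.subst_var, Function.update_self, subst_update_var_of_notMem fun h => hb (.inr h)]

theorem wmul_wI_left (F : Wiring) : WEq (wmul wI F) F := by
  refine ⟨fun p ⟨i, hi, g, hg, hp⟩ => ⟨g, hg, flowEquiv_of_isProd_wI hi hp⟩, fun g hg => ?_⟩
  obtain ⟨i, hi, hp⟩ := exists_isProd_wI g
  exact ⟨g, ⟨i, hi, g, hg, hp⟩, .refl g⟩

theorem wmul_wI_right (F : Wiring) : WEq (wmul F wI) F := by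
  refine WEq.of_preimage_swap ?_
  rw [preimage_swap_wmul, preimage_swap_wI]
  exact wmul_wI_left _

/-- Conjugate `θ` by a renaming that fixes the variables of the product and sends the other
variables of `a`, `b` and `θ` away from `c`. -/
theorem exists_rename_apart {a b c : UFlow} {θ : ℕ → Tm} (hθ : IsMGUAll θ [(a.2, b.1)])
    (hab : Disjoint (flowVars a) (flowVars b))
    (hc : Disjoint (flowVars (subst θ a.1, subst θ b.2)) (flowVars c)) :
    ∃ a' b' θ', FlowEquiv a a' ∧ FlowEquiv b b' ∧ Disjoint (flowVars a') (flowVars b') ∧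
      Disjoint (flowVars a') (flowVars c) ∧ Disjoint (flowVars b') (flowVars c) ∧
      IsMGUAll θ' [(a'.2, b'.1)] ∧ subst θ' a'.1 = subst θ a.1 ∧ subst θ' b'.2 = subst θ b.2 ∧
      subst θ' c.1 = c.1 ∧ subst θ' c.2 = c.2 := by
  obtain ⟨S, hS, hθS⟩ := hθ.1.exists_supportedIn
  set T := flowVars (subst θ a.1, subst θ b.2)
  set V := flowVars a ∪ flowVars b ∪ S
  obtain ⟨κ, hκ, hκT, hκV⟩ := exists_perm_fix_avoid (flowVars_finite _)
    (((flowVars_finite a).union (flowVars_finite b)).union hS).sdiff (flowVars_finite c)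
    Set.disjoint_sdiff_left (T := T) (S := V \ T)
  have hκc : ∀ x ∈ V, κ x ∉ flowVars c := fun x hx => by
    by_cases hxT : x ∈ T
    · rw [hκT x hxT]
      exact hc.notMem_of_mem_left hxT
    · exact hκV x ⟨hx, hxT⟩
  have hκc' : Disjoint (κ '' V) (flowVars c) :=
    Set.disjoint_left.2 fun _ ⟨x, hx, hxy⟩ => hxy ▸ hκc x hx
  have hfix (t : Tm) (ht : ∀ x ∈ varsL t, x ∈ T) : rename κ t = t :=
    Tm.subst_eq_self fun x hx => by rw [hκT x (ht x hx)]
  have hconj (t : Tm) : subst (rename κ ∘ θ ∘ κ.symm) (rename κ t) = rename κ (subst θ t) := by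
    rw [subst_rename_comp, subst_comp_perm_rename]
  have hθc : ∀ t, (∀ x ∈ varsL t, x ∈ flowVars c) → subst (rename κ ∘ θ ∘ κ.symm) t = t :=
    fun t ht => (hθS.conj κ).subst_eq_self fun x hx hxS =>
      hκc'.notMem_of_mem_left (Set.image_mono Set.subset_union_right hxS) (ht x hx)
  refine ⟨Prod.map (rename κ) (rename κ) a, Prod.map (rename κ) (rename κ) b,
    rename κ ∘ θ ∘ κ.symm, ⟨κ, rfl, rfl⟩, ⟨κ, rfl, rfl⟩, ?_, ?_, ?_,
    (hθ.comp_perm_symm hκ).rename_comp hκ, ?_, ?_, hθc _ fun x hx => .inl hx,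
    hθc _ fun x hx => .inr hx⟩
  · rw [flowVars_map_rename, flowVars_map_rename]
    exact (Set.disjoint_image_iff κ.injective).2 hab
  · rw [flowVars_map_rename]
    exact hκc'.mono_left (Set.image_mono (by intro x; simp +contextual [V]))
  · rw [flowVars_map_rename]
    exact hκc'.mono_left (Set.image_mono (by intro x; simp +contextual [V]))
  · exact (hconj _).trans (hfix _ fun x hx => .inl hx)
  · exact (hconj _).trans (hfix _ fun x hx => .inr hx)

/-- The common normal form of both bracketings of a product of three flows. -/
def IsProd3 (f g h p : UFlow) : Prop :=
  ∃ f' g' h' θ, FlowEquiv f f' ∧ FlowEquiv g g' ∧ FlowEquiv h h' ∧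
    Disjoint (flowVars f') (flowVars g') ∧ Disjoint (flowVars f') (flowVars h') ∧
    Disjoint (flowVars g') (flowVars h') ∧
    IsMGUAll θ [(f'.2, g'.1), (g'.2, h'.1)] ∧ p = (subst θ f'.1, subst θ h'.2)

theorem IsProd.isProd3 {f g h e p : UFlow} (hfg : IsProd f g e) (hep : IsProd e h p) :
    IsProd3 f g h p := by
  obtain ⟨f₁, g₁, θ₁, hf₁, hg₁, hfg₁, hθ₁, rfl⟩ := hfg
  obtain ⟨e', h', θ₂, he', hh', he'h', hθ₂, rfl⟩ := hep
  obtain ⟨π, hπ, hπ₁, hπ₂⟩ := he'.exists_finitary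
  have he₁ : subst (rename π ∘ θ₁) f₁.1 = e'.1 := (subst_rename_comp _).trans hπ₁
  have he₂ : subst (rename π ∘ θ₁) g₁.2 = e'.2 := (subst_rename_comp _).trans hπ₂
  obtain ⟨f₂, g₂, Θ, hf₂, hg₂, hfg₂, hf₂h', hg₂h', hΘ, hΘf₂, hΘg₂, hΘh'₁, hΘh'₂⟩ :=
    exists_rename_apart ((isMGU_iff_isMGUAll.1 hθ₁).rename_comp hπ)
      (Set.disjoint_iff_inter_eq_empty.2 hfg₁)
      (by rw [show (_, _) = e' from Prod.ext he₁ he₂]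
          exact Set.disjoint_iff_inter_eq_empty.2 he'h')
  have hθ₂' : IsMGUAll θ₂ (substSys Θ [(g₂.2, h'.1)]) := by
    rw [show substSys Θ [(g₂.2, h'.1)] = [(e'.2, h'.1)] by simp [substSys, hΘg₂, he₂, hΘh'₁]]
    exact isMGU_iff_isMGUAll.1 hθ₂
  refine ⟨f₂, g₂, h', subst θ₂ ∘ Θ, hf₁.trans hf₂, hg₁.trans hg₂, hh', hfg₂, hf₂h', hg₂h',
    hΘ.append hθ₂', ?_⟩
  rw [← Tm.subst_subst, ← Tm.subst_subst, hΘf₂, he₁, hΘh'₂]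

theorem IsProd3.exists_isProd {f g h p : UFlow} (hp : IsProd3 f g h p) :
    ∃ m q, IsProd g h m ∧ IsProd f m q ∧ FlowEquiv p q := by
  obtain ⟨f', g', h', Θ, hf, hg, hh, hfg, hfh, hgh, hΘ, rfl⟩ := hp
  have hΘu : UnifiesAll Θ ([(g'.2, h'.1)] ++ [(f'.2, g'.1)]) := by
    simpa [and_comm] using hΘ.2.1
  obtain ⟨σ₁, hσ₁, hσ₁V⟩ := exists_isMGUAll [(g'.2, h'.1)] ⟨Θ, hΘ.1, (unifiesAll_append.1 hΘu).1⟩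
  obtain ⟨σ₂, hσ₂, hσ⟩ := hσ₁.exists_append ⟨Θ, hΘ.1, hΘu⟩
  -- `σ₁` only involves variables of `g'` and `h'`, so it fixes `f'`
  have hV : ∀ x ∈ (sysVars [(g'.2, h'.1)] : Set ℕ), x ∈ flowVars g' ∪ flowVars h' := by
    intro x hx
    rcases (by simpa using hx : x ∈ varsL g'.2 ∨ x ∈ varsL h'.1) with hx | hx
    exacts [.inl (.inr hx), .inr (.inl hx)]
  have hf'V : Disjoint (flowVars f') (flowVars g' ∪ flowVars h') :=
    Set.disjoint_union_right.2 ⟨hfg, hfh⟩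
  have hσ₁f : ∀ t, (∀ x ∈ varsL t, x ∈ flowVars f') → subst σ₁ t = t := fun t ht =>
    hσ₁V.subst_eq_self fun x hx hxV => hf'V.notMem_of_mem_left (ht x hx) (hV x hxV)
  set m : UFlow := (subst σ₁ g'.1, subst σ₁ h'.2)
  have hm : IsProd g h m := ⟨g', h', σ₁, hg, hh, Set.disjoint_iff_inter_eq_empty.1 hgh,
    isMGU_iff_isMGUAll.2 hσ₁, rfl⟩
  have hfm : Disjoint (flowVars f') (flowVars m) := by
    refine Set.disjoint_right.2 fun x hx hxf => hf'V.notMem_of_mem_left hxf ?_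
    rcases hx with hx | hx <;> rcases hσ₁V.mem_varsL_subst hx with hx | hx
    exacts [.inl (.inl hx), hV x hx, .inr (.inr hx), hV x hx]
  have hq : IsProd f m (subst σ₂ f'.1, subst σ₂ m.2) := ⟨f', m, σ₂, hf, .refl m,
    Set.disjoint_iff_inter_eq_empty.1 hfm,
    isMGU_iff_isMGUAll.2 (by simpa [substSys, hσ₁f f'.2 fun x hx => .inr hx] using hσ₂), rfl⟩
  refine ⟨m, _, hm, hq, (hΘ.flowEquiv (hσ.congr fun τ => by simp [and_comm]) f'.1 h'.2).trans ?_⟩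
  rw [← Tm.subst_subst, ← Tm.subst_subst, hσ₁f f'.1 fun x hx => .inl hx]

theorem exists_mem_wmul_assoc {F G H : Wiring} {p : UFlow} (hp : p ∈ wmul (wmul F G) H) :
    ∃ q ∈ wmul F (wmul G H), FlowEquiv p q := by
  obtain ⟨e, ⟨f, hf, g, hg, hfg⟩, h, hh, hep⟩ := hp
  obtain ⟨m, q, hm, hq, hpq⟩ := (hfg.isProd3 hep).exists_isProd
  exact ⟨q, ⟨f, hf, m, ⟨g, hg, h, hh, hm⟩, hq⟩, hpq⟩

theorem wmul_assoc (F G H : Wiring) : WEq (wmul (wmul F G) H) (wmul F (wmul G H)) := by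
  refine ⟨fun _ => exists_mem_wmul_assoc, fun p hp => ?_⟩
  -- the reverse inclusion is the mirror image of the first one under `Prod.swap`
  have hp' : p.swap ∈ wmul (wmul (Prod.swap ⁻¹' H) (Prod.swap ⁻¹' G)) (Prod.swap ⁻¹' F) := by
    rw [← preimage_swap_wmul, ← preimage_swap_wmul]
    exact hp
  obtain ⟨q, hq, hpq⟩ := exists_mem_wmul_assoc hp'
  rw [← preimage_swap_wmul, ← preimage_swap_wmul] at hq
  exact ⟨q.swap, hq, hpq.swap.symm⟩

theorem wmul_union (F G H : Wiring) : wmul F (G ∪ H) = wmul F G ∪ wmul F H := by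
  ext
  simp [wmul, or_and_right, and_or_left, exists_or]

theorem union_wmul (F G H : Wiring) : wmul (F ∪ G) H = wmul F H ∪ wmul G H := by
  ext
  simp [wmul, or_and_right, exists_or]

/-- wirings form a semiring (without additive inverses): sum (union) is
associative, commutative, with unit `0 = ∅`; the product is associative with unit
`I = x ⊸ x` (up to renaming of flows, i.e. `WEq`); and the product distributes over
sums, with `0` annihilating. -/
theorem wiring_semiring :
    (∀ F G H : Wiring, (F ∪ G) ∪ H = F ∪ (G ∪ H)) ∧
    (∀ F G : Wiring, F ∪ G = G ∪ F) ∧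
    (∀ F : Wiring, F ∪ ∅ = F) ∧
    (∀ F G H : Wiring, (∀ f ∈ F, IsFlow f) → (∀ g ∈ G, IsFlow g) → (∀ h ∈ H, IsFlow h) →
      WEq (wmul (wmul F G) H) (wmul F (wmul G H))) ∧
    (∀ F : Wiring, (∀ f ∈ F, IsFlow f) → WEq (wmul wI F) F ∧ WEq (wmul F wI) F) ∧
    (∀ F G H : Wiring,
      wmul F (G ∪ H) = wmul F G ∪ wmul F H ∧ wmul (F ∪ G) H = wmul F H ∪ wmul G H) ∧
    (∀ F : Wiring, wmul F ∅ = ∅ ∧ wmul ∅ F = ∅) :=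
  ⟨Set.union_assoc, Set.union_comm, Set.union_empty,
    fun F G H _ _ _ => wmul_assoc F G H,
    fun F _ => ⟨wmul_wI_left F, wmul_wI_right F⟩,
    fun F G H => ⟨wmul_union F G H, union_wmul F G H⟩,
    fun F => ⟨by simp [wmul], by simp [wmul]⟩⟩
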